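/- Let g ∈ R⟦t⟧[x_1,...,x_n] and fix w ∈ ℝ_{<0}×ℝ^n. Then the set {v ∈ ℝ_{<0}×ℝ^n : in_v(g) = in_w(g)} is the intersection of ℝ_{<0}×ℝ^n with a finite set of open linear half-spaces and linear hyperplanes; in particular it is a relatively open convex rational polyhedral cone. -/

import Mathlib

/-!
Because `v₀ < 0`, among the terms `t^β x^α` of `g` with a fixed `α` only the one of least
`t`-order can have maximal `v`-degree. So `in_v(g)` is determined by the set of `α` at which the
finitely many integer linear forms `v ↦ ⟨(β_α, α), v⟩` attain their maximum. Fixing `α₀` in this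
set for `w`, the condition `in_v(g) = in_w(g)` says exactly that `⟨(β_α, α) - (β_α₀, α₀), v⟩`
vanishes for the other `α` in the set and is negative for the remaining `α` in the support of `g`.
-/

open MvPolynomial

noncomputable section

variable {R : Type*} [CommRing R] {n : ℕ}

/-- The mixed power-series–polynomial ring `R⟦t⟧[x₁,…,xₙ]`. -/
abbrev MixedRing (R : Type*) [CommRing R] (n : ℕ) :=
  MvPolynomial (Fin n) (PowerSeries R)

/-- The polynomial ring `R[t][x₁,…,xₙ] = R[t,x]`. -/
abbrev PolyRing (R : Type*) [CommRing R] (n : ℕ) :=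
  MvPolynomial (Fin n) (Polynomial R)

/-- A monomial `t^β x^α` is encoded as the pair `(α, β)`. -/
abbrev Mon (n : ℕ) := (Fin n →₀ ℕ) × ℕ

/-- The coefficient of `f ∈ R⟦t⟧[x]` at the monomial `t^β x^α`. -/
def coeffAt (f : MixedRing R n) (m : Mon n) : R :=
  PowerSeries.coeff m.2 (MvPolynomial.coeff m.1 f)

/-- The coefficient of `q ∈ R[t,x]` at the monomial `t^β x^α`. -/
def coeffAtP (q : PolyRing R n) (m : Mon n) : R :=
  (MvPolynomial.coeff m.1 q).coeff m.2

/-- The `w`-weighted degree of the monomial `t^β x^α`, where `w = (w₀, w₁,…,wₙ)`. -/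
def wdeg (w0 : ℝ) (w : Fin n → ℝ) (m : Mon n) : ℝ :=
  w0 * m.2 + ∑ i, w i * (m.1 i : ℝ)

/-- The maximal `w`-weighted degree of a term of `f ∈ R⟦t⟧[x]`
(as a supremum; it is attained when `w₀ < 0` and `f ≠ 0`). -/
def maxdeg (w0 : ℝ) (w : Fin n → ℝ) (f : MixedRing R n) : ℝ :=
  sSup (wdeg w0 w '' {m | coeffAt f m ≠ 0})

/-- The least power of `t` occurring in a power series `s` (junk value `0` for `s = 0`). -/
def tord (s : PowerSeries R) : ℕ :=
  sInf {k | PowerSeries.coeff k s ≠ 0}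

open Classical in
/-- The initial form `in_w(f)` of `f ∈ R⟦t⟧[x]` with respect to the weight
vector `w = (w₀, w) ∈ ℝ_{<0} × ℝⁿ`: the sum of the terms of `f` of maximal
`w`-weighted degree.  Since `w₀ < 0`, for each `x`-monomial `x^α` only the term
of least `t`-order can contribute, so the initial form is a polynomial in
`R[t,x]`. -/
def initialForm (w0 : ℝ) (w : Fin n → ℝ) (f : MixedRing R n) : PolyRing R n :=
  ∑ α ∈ f.support,
    if wdeg w0 w (α, tord (MvPolynomial.coeff α f)) = maxdeg w0 w f then
      MvPolynomial.monomial α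
        (Polynomial.monomial (tord (MvPolynomial.coeff α f))
          (PowerSeries.coeff (tord (MvPolynomial.coeff α f)) (MvPolynomial.coeff α f)))
    else 0

/-- `r` is a `t`-local monomial ordering on `Mon(t,x)`: a strict total order
(`r a b` meaning `a < b`) compatible with the semigroup structure and with
`t < 1` (so that leading monomials — the largest monomials occurring — of unit
power series are `1`). -/
def IsTLocalOrder (r : Mon n → Mon n → Prop) : Prop :=
  (∀ a b, a ≠ b → r a b ∨ r b a) ∧ (∀ a, ¬ r a a) ∧
  (∀ a b c, r a b → r b c → r a c) ∧
  (∀ a b c, r a b → r (a + c) (b + c)) ∧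
  r ((0 : Fin n →₀ ℕ), 1) ((0 : Fin n →₀ ℕ), 0)

/-- `f ∈ R⟦t⟧[x]` has leading term `c · t^β x^α` (with `m = (α,β)`) with respect
to the ordering `r`: the coefficient of `f` at `m` is `c ≠ 0` and every other
monomial occurring in `f` is `r`-smaller than `m`. -/
def IsLeadingTerm (r : Mon n → Mon n → Prop) (f : MixedRing R n) (m : Mon n) (c : R) : Prop :=
  coeffAt f m = c ∧ c ≠ 0 ∧ ∀ m', coeffAt f m' ≠ 0 → m' = m ∨ r m' m

/-- Leading-term predicate for elements of `R[t,x]`. -/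
def IsLeadingTermP (r : Mon n → Mon n → Prop) (q : PolyRing R n) (m : Mon n) (c : R) : Prop :=
  coeffAtP q m = c ∧ c ≠ 0 ∧ ∀ m', coeffAtP q m' ≠ 0 → m' = m ∨ r m' m

/-- The term `c · t^β x^α` as an element of `R[t,x]`. -/
def termA (m : Mon n) (c : R) : PolyRing R n :=
  MvPolynomial.monomial m.1 (Polynomial.monomial m.2 c)

/-- The leading ideal `lt_>(I) ⊆ R[t,x]` of an ideal `I ⊆ R⟦t⟧[x]`. -/
def ltIdeal (r : Mon n → Mon n → Prop) (I : Ideal (MixedRing R n)) : Ideal (PolyRing R n) :=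
  Ideal.span {q | ∃ f ∈ I, ∃ m c, IsLeadingTerm r f m c ∧ q = termA m c}

/-- The ideal of `R[t,x]` generated by the leading terms of a finite set `G ⊆ R⟦t⟧[x]`. -/
def ltSpan (r : Mon n → Mon n → Prop) (G : Finset (MixedRing R n)) : Ideal (PolyRing R n) :=
  Ideal.span {q | ∃ f ∈ G, ∃ m c, IsLeadingTerm r f m c ∧ q = termA m c}

/-- The leading ideal of an ideal `J ⊆ R[t,x]`. -/
def ltIdealP (r : Mon n → Mon n → Prop) (J : Ideal (PolyRing R n)) : Ideal (PolyRing R n) :=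
  Ideal.span {q | ∃ f ∈ J, ∃ m c, IsLeadingTermP r f m c ∧ q = termA m c}

/-- The initial ideal `in_w(I) ⊆ R[t,x]` of an ideal `I ⊆ R⟦t⟧[x]`. -/
def initialIdeal (w0 : ℝ) (w : Fin n → ℝ) (I : Ideal (MixedRing R n)) : Ideal (PolyRing R n) :=
  Ideal.span {q | ∃ f ∈ I, q = initialForm w0 w f}

/-- `f ∈ R⟦t⟧[x]` is `x`-homogeneous: all monomials occurring in `f` have the
same total degree in the variables `x₁,…,xₙ`. -/
def IsXHomogeneous (f : MixedRing R n) : Prop :=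
  ∃ d, ∀ α ∈ f.support, (α.sum fun _ e => e) = d

/-- An ideal `I ⊆ R⟦t⟧[x]` is `x`-homogeneous if it is generated by
`x`-homogeneous elements. -/
def Ideal.IsXHomogeneousIdeal (I : Ideal (MixedRing R n)) : Prop :=
  ∃ S : Set (MixedRing R n), (∀ f ∈ S, IsXHomogeneous f) ∧ I = Ideal.span S

/-- The `t`-initial truncation `Σ_α lt_>(g_α)·x^α` of `g = Σ_α g_α·x^α ∈ R⟦t⟧[x]`,
keeping for each `x`-monomial only the term of least `t`-power. -/
def tTrunc (g : MixedRing R n) : MixedRing R n :=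
  ∑ α ∈ g.support,
    MvPolynomial.monomial α
      ((PowerSeries.monomial (tord (MvPolynomial.coeff α g)))
        (PowerSeries.coeff (tord (MvPolynomial.coeff α g)) (MvPolynomial.coeff α g)))

/-- `G` is a standard basis of the ideal `I ⊆ R⟦t⟧[x]` with respect to `r`:
`G ⊆ I` and the leading terms of the elements of `G` generate the leading
ideal of `I`. -/
def IsStandardBasis (r : Mon n → Mon n → Prop) (I : Ideal (MixedRing R n))
    (G : Finset (MixedRing R n)) : Prop :=
  ↑G ⊆ (I : Set (MixedRing R n)) ∧ ltSpan r G = ltIdeal r I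

open Classical in
/-- `G` is an initially reduced standard basis of `I` w.r.t. `r`: a standard
basis that is minimal and such that no term of the `t`-initial truncation of
any `g ∈ G`, other than the leading term of `g`, lies in the leading ideal. -/
def IsInitiallyReducedSB (r : Mon n → Mon n → Prop) (I : Ideal (MixedRing R n))
    (G : Finset (MixedRing R n)) : Prop :=
  IsStandardBasis r I G ∧
  (∀ g ∈ G, ltSpan r (G.erase g) ≠ ltSpan r G) ∧
  (∀ g ∈ G, ∀ m, coeffAt (tTrunc g) m ≠ 0 → ¬ (∃ c, IsLeadingTerm r g m c) →
    termA m (coeffAt (tTrunc g) m) ∉ ltIdeal r I)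

/-- The (interior part of the) Gröbner cone `C_>(I)`: the Euclidean closure of
the set of weight vectors `v ∈ ℝ_{<0} × ℝⁿ` with `in_v(I) = lt_>(I)`. -/
def groebnerCone (r : Mon n → Mon n → Prop) (I : Ideal (MixedRing R n)) :
    Set (ℝ × (Fin n → ℝ)) :=
  closure {v : ℝ × (Fin n → ℝ) | v.1 < 0 ∧ initialIdeal v.1 v.2 I = ltIdeal r I}

theorem Finset.filter_eq_sup'_eq_iff {ι α : Type*} [DecidableEq ι] [LinearOrder α] {s : Finset ι}
    (hs : s.Nonempty) (f : ι → α) {S : Finset ι} (hS : S ⊆ s) {i₀ : ι} (hi₀ : i₀ ∈ S) :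
    {i ∈ s | f i = s.sup' hs f} = S ↔ (∀ i ∈ S, f i = f i₀) ∧ ∀ i ∈ s \ S, f i < f i₀ := by
  constructor
  · rintro rfl
    have hmax : f i₀ = s.sup' hs f := (Finset.mem_filter.1 hi₀).2
    refine ⟨fun i hi => (Finset.mem_filter.1 hi).2.trans hmax.symm, fun i hi => ?_⟩
    obtain ⟨his, hiS⟩ := Finset.mem_sdiff.1 hi
    exact hmax ▸ (Finset.le_sup' f his).lt_of_ne fun h => hiS (Finset.mem_filter.2 ⟨his, h⟩)
  · rintro ⟨hS_eq, hS_lt⟩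
    have hmax : s.sup' hs f = f i₀ := by
      refine le_antisymm (Finset.sup'_le _ _ fun i hi => ?_) (Finset.le_sup' f (hS hi₀))
      by_cases hiS : i ∈ S
      · exact (hS_eq i hiS).le
      · exact (hS_lt i (Finset.mem_sdiff.2 ⟨hi, hiS⟩)).le
    ext i
    rw [Finset.mem_filter, hmax]
    refine ⟨fun ⟨his, hi⟩ => ?_, fun hi => ⟨hS hi, hS_eq i hi⟩⟩
    by_contra hiS
    exact (hS_lt i (Finset.mem_sdiff.2 ⟨his, hiS⟩)).ne hi

lemma tord_le {s : PowerSeries R} {k : ℕ} (hk : PowerSeries.coeff k s ≠ 0) : tord s ≤ k :=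
  Nat.sInf_le hk

lemma coeff_tord_ne_zero {s : PowerSeries R} (hs : s ≠ 0) :
    PowerSeries.coeff (tord s) s ≠ 0 := by
  obtain ⟨k, hk⟩ : ∃ k, PowerSeries.coeff k s ≠ 0 := by
    by_contra! h
    exact hs (PowerSeries.ext h)
  exact Nat.sInf_mem (s := {k | PowerSeries.coeff k s ≠ 0}) ⟨k, hk⟩

/-- `(α, β)` with `β` the least `t`-order of a term `t^β x^α` of `g`. -/
abbrev tMinMon (g : MixedRing R n) (α : Fin n →₀ ℕ) : Mon n :=
  (α, tord (MvPolynomial.coeff α g))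

lemma coeffAt_tMinMon_ne_zero {g : MixedRing R n} {α : Fin n →₀ ℕ} (hα : α ∈ g.support) :
    coeffAt g (tMinMon g α) ≠ 0 :=
  coeff_tord_ne_zero (MvPolynomial.mem_support_iff.1 hα)

lemma wdeg_le_wdeg_tMinMon {w0 : ℝ} (hw0 : w0 < 0) (w : Fin n → ℝ) {g : MixedRing R n}
    {m : Mon n} (hm : coeffAt g m ≠ 0) : wdeg w0 w m ≤ wdeg w0 w (tMinMon g m.1) := by
  have h : (tord (MvPolynomial.coeff m.1 g) : ℝ) ≤ m.2 := by exact_mod_cast tord_le hm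
  simp only [wdeg]
  nlinarith

lemma maxdeg_eq_sup' {w0 : ℝ} (hw0 : w0 < 0) (w : Fin n → ℝ) {g : MixedRing R n}
    (hg : g.support.Nonempty) :
    maxdeg w0 w g = g.support.sup' hg (fun α => wdeg w0 w (tMinMon g α)) := by
  refine IsGreatest.csSup_eq ⟨?_, ?_⟩
  · obtain ⟨α, hα, hmax⟩ := Finset.exists_mem_eq_sup' hg (fun α => wdeg w0 w (tMinMon g α))
    exact hmax ▸ ⟨tMinMon g α, coeffAt_tMinMon_ne_zero hα, rfl⟩
  · rintro _ ⟨m, hm, rfl⟩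
    have hm₁ : m.1 ∈ g.support := by
      rw [MvPolynomial.mem_support_iff]
      exact fun h => hm (by simp [coeffAt, h])
    exact (wdeg_le_wdeg_tMinMon hw0 w hm).trans
      (Finset.le_sup' (fun α => wdeg w0 w (tMinMon g α)) hm₁)

open Classical in
def initialSupport (w0 : ℝ) (w : Fin n → ℝ) (g : MixedRing R n) : Finset (Fin n →₀ ℕ) :=
  {α ∈ g.support | wdeg w0 w (tMinMon g α) = maxdeg w0 w g}

lemma initialSupport_subset (w0 : ℝ) (w : Fin n → ℝ) (g : MixedRing R n) :
    initialSupport w0 w g ⊆ g.support :=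
  Finset.filter_subset _ _

abbrev tMinTerm (g : MixedRing R n) (α : Fin n →₀ ℕ) : PolyRing R n :=
  termA (tMinMon g α) (coeffAt g (tMinMon g α))

lemma initialForm_eq_sum (w0 : ℝ) (w : Fin n → ℝ) (g : MixedRing R n) :
    initialForm w0 w g = ∑ α ∈ initialSupport w0 w g, tMinTerm g α := by
  classical
  rw [initialSupport, Finset.sum_filter]
  rfl

lemma support_initialForm (w0 : ℝ) (w : Fin n → ℝ) (g : MixedRing R n) :
    (initialForm w0 w g).support = initialSupport w0 w g := by
  classical
  ext α
  rw [MvPolynomial.mem_support_iff, initialForm_eq_sum, MvPolynomial.coeff_sum]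
  simp only [tMinTerm, termA, MvPolynomial.coeff_monomial, Finset.sum_ite_eq']
  split_ifs with hα
  · simpa [hα, Polynomial.monomial_eq_zero_iff] using
      coeffAt_tMinMon_ne_zero (Finset.mem_of_mem_filter α hα)
  · simpa using hα

theorem initialForm_eq_initialForm_iff (v0 w0 : ℝ) (v w : Fin n → ℝ) (g : MixedRing R n) :
    initialForm v0 v g = initialForm w0 w g ↔ initialSupport v0 v g = initialSupport w0 w g := by
  refine ⟨fun h => ?_, fun h => ?_⟩
  · rw [← support_initialForm, ← support_initialForm, h]
  · rw [initialForm_eq_sum, initialForm_eq_sum, h]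

lemma initialSupport_eq_filter_sup' {w0 : ℝ} (hw0 : w0 < 0) (w : Fin n → ℝ) {g : MixedRing R n}
    (hg : g.support.Nonempty) : initialSupport w0 w g =
      {α ∈ g.support | wdeg w0 w (tMinMon g α) =
        g.support.sup' hg (fun α => wdeg w0 w (tMinMon g α))} := by
  rw [initialSupport, maxdeg_eq_sup' hw0 w hg]

lemma initialSupport_nonempty {w0 : ℝ} (hw0 : w0 < 0) (w : Fin n → ℝ) {g : MixedRing R n}
    (hg : g.support.Nonempty) : (initialSupport w0 w g).Nonempty := by
  obtain ⟨α, hα, hmax⟩ := Finset.exists_mem_eq_sup' hg (fun α => wdeg w0 w (tMinMon g α))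
  rw [initialSupport_eq_filter_sup' hw0 w hg]
  exact ⟨α, Finset.mem_filter.2 ⟨hα, hmax.symm⟩⟩

def pairing (a : ℤ × (Fin n → ℤ)) (v : ℝ × (Fin n → ℝ)) : ℝ :=
  (a.1 : ℝ) * v.1 + ∑ j, (a.2 j : ℝ) * v.2 j

lemma pairing_sub (a b : ℤ × (Fin n → ℤ)) (v : ℝ × (Fin n → ℝ)) :
    pairing (a - b) v = pairing a v - pairing b v := by
  simp only [pairing, Prod.fst_sub, Prod.snd_sub, Pi.sub_apply, Int.cast_sub, sub_mul,
    Finset.sum_sub_distrib]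
  ring

def Mon.toVec (m : Mon n) : ℤ × (Fin n → ℤ) :=
  (m.2, fun j => m.1 j)

lemma wdeg_eq_pairing (m : Mon n) (v : ℝ × (Fin n → ℝ)) :
    wdeg v.1 v.2 m = pairing m.toVec v := by
  simp [wdeg, pairing, Mon.toVec, mul_comm]

theorem exists_finite_setOf_initialForm_eq (g : MixedRing R n) {w0 : ℝ} (hw0 : w0 < 0)
    (w : Fin n → ℝ) : ∃ A B : Set (ℤ × (Fin n → ℤ)), A.Finite ∧ B.Finite ∧
      {v : ℝ × (Fin n → ℝ) | v.1 < 0 ∧ initialForm v.1 v.2 g = initialForm w0 w g} =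
        {v | v.1 < 0} ∩ {v | ∀ a ∈ A, 0 < pairing a v} ∩ {v | ∀ b ∈ B, pairing b v = 0} := by
  classical
  rcases g.support.eq_empty_or_nonempty with hg | hg
  · refine ⟨∅, ∅, Set.finite_empty, Set.finite_empty, ?_⟩
    have hempty : ∀ v0 v, initialSupport v0 v g = ∅ := by simp [initialSupport, hg]
    ext v
    simp [initialForm_eq_initialForm_iff, hempty]
  set S := initialSupport w0 w g
  obtain ⟨α₀, hα₀⟩ := initialSupport_nonempty hw0 w hg
  let e : (Fin n →₀ ℕ) → ℤ × (Fin n → ℤ) := fun α => (tMinMon g α).toVec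
  refine ⟨(fun β => e α₀ - e β) '' ↑(g.support \ S), (fun β => e β - e α₀) '' ↑S,
    Set.toFinite _, Set.toFinite _, ?_⟩
  ext v
  simp only [Set.mem_ofPred_eq, Set.mem_inter_iff, Set.forall_mem_image, Finset.mem_coe,
    pairing_sub, e, ← wdeg_eq_pairing, sub_pos, sub_eq_zero, and_assoc]
  refine and_congr_right fun hv => ?_
  rw [initialForm_eq_initialForm_iff, initialSupport_eq_filter_sup' hv v.2 hg,
    Finset.filter_eq_sup'_eq_iff hg _ (initialSupport_subset w0 w g) hα₀, and_comm]

/-- For fixed `g ∈ R⟦t⟧[x]` and `w ∈ ℝ_{<0} × ℝⁿ`, the set of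
weight vectors `v ∈ ℝ_{<0} × ℝⁿ` with `in_v(g) = in_w(g)` is the intersection
of `ℝ_{<0} × ℝⁿ` with finitely many open linear half-spaces and linear
hyperplanes, all with integer (in particular rational) coefficients; it is
therefore a relatively open convex rational polyhedral cone. -/
theorem initialForm_equivClass_polyhedral (g : MixedRing R n)
    (w0 : ℝ) (hw0 : w0 < 0) (w : Fin n → ℝ) :
    ∃ (k l : ℕ) (A : Fin k → ℤ × (Fin n → ℤ)) (B : Fin l → ℤ × (Fin n → ℤ)),
      {v : ℝ × (Fin n → ℝ) | v.1 < 0 ∧ initialForm v.1 v.2 g = initialForm w0 w g} =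
        {v : ℝ × (Fin n → ℝ) | v.1 < 0} ∩
        {v | ∀ i, 0 < ((A i).1 : ℝ) * v.1 + ∑ j, ((A i).2 j : ℝ) * v.2 j} ∩
        {v | ∀ i, ((B i).1 : ℝ) * v.1 + ∑ j, ((B i).2 j : ℝ) * v.2 j = 0} := by
  obtain ⟨A, B, hA, hB, hcone⟩ := exists_finite_setOf_initialForm_eq g hw0 w
  obtain ⟨k, a, -, rfl⟩ := hA.fin_param
  obtain ⟨l, b, -, rfl⟩ := hB.fin_param
  refine ⟨k, l, a, b, ?_⟩
  rw [hcone]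
  simp only [Set.forall_mem_range]
  rfl

end
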